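/- arXiv:1808.05566 — 7 statements merged into one kernel-verified Lean document; each statement's English description precedes it below -/
import Mathlib

section
/- The function g(a) := ∫₀¹ (a^{1 - 1/u} / u) du is strictly decreasing in a for a > 1, and there exists a unique α > 1 with g(α) = 1. -/
/-!
Write `c = log a` and `k c u = exp ((1 - 1/u) c) / u`, so that the function is `G (log a)` with
`G c = ∫₀¹ k c u du`. As `1 - 1/u < 0` on `(0, 1)`, `k c u` is strictly decreasing in `c`, hence so
is `G`. With `t = 1/u - 1 ≥ 0` one has `k c u = (1 + t) e^{-ct} ≤ (1 + t)/(1 + ct) ≤ 1 + 1/c`, a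
bound uniform in `u` which gives integrability and, by dominated convergence, continuity of `G` on
`(0, ∞)`. At `c = 1` the inequality `1 - 1/u < log u` gives `k 1 u < 1`, so `G 1 < 1`; at
`c = ε = e^{-3}` one has `k ε u ≥ e^{-1}/u` on `[ε, 1]`, so `G ε ≥ 3/e > 1`. The intermediate value
theorem and strict monotonicity give existence and uniqueness of `α`.
-/

open Real Set MeasureTheory

noncomputable def kernel (c u : ℝ) : ℝ := exp ((1 - 1 / u) * c) / u

noncomputable def kernelIntegral (c : ℝ) : ℝ := ∫ u in (0:ℝ)..1, kernel c u

lemma intervalIntegral_lt_intervalIntegral_of_lt_on_Ioo {f g : ℝ → ℝ} {a b : ℝ} (hab : a < b)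
    (hf : IntervalIntegrable f volume a b) (hg : IntervalIntegrable g volume a b)
    (hlt : ∀ x ∈ Ioo a b, f x < g x) : ∫ x in a..b, f x < ∫ x in a..b, g x := by
  have hpos := intervalIntegral.intervalIntegral_pos_of_pos_on (hg.sub hf)
    (fun x hx => sub_pos.2 (hlt x hx)) hab
  rw [intervalIntegral.integral_sub hg hf] at hpos
  linarith

lemma kernel_nonneg (c : ℝ) {u : ℝ} (hu : 0 ≤ u) : 0 ≤ kernel c u :=
  div_nonneg (exp_pos _).le hu

lemma kernel_le {c u : ℝ} (hc : 0 < c) (hu : u ∈ Ioc (0:ℝ) 1) : kernel c u ≤ 1 + 1 / c := by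
  obtain ⟨hu0, hu1⟩ := hu
  set t := 1 / u - 1 with ht_def
  have ht : 0 ≤ t := by rw [sub_nonneg, le_div_iff₀ hu0]; linarith
  have hct : 0 ≤ c * t := mul_nonneg hc.le ht
  have hk : kernel c u = (1 + t) / exp (c * t) := by
    rw [kernel, show (1 - 1 / u) * c = -(c * t) by rw [ht_def]; ring, exp_neg,
      show u = 1 / (1 + t) by rw [ht_def]; field_simp; ring]
    field_simp
  calc kernel c u = (1 + t) / exp (c * t) := hk
    _ ≤ (1 + t) / (1 + c * t) :=
        div_le_div_of_nonneg_left (by linarith) (by linarith) (by linarith [add_one_le_exp (c * t)])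
    _ ≤ 1 + 1 / c := by
        rw [div_le_iff₀ (by linarith)]
        have hexpand : (1 + 1 / c) * (1 + c * t) = 1 + t + (c * t + 1 / c) := by field_simp; ring
        rw [hexpand]
        have : 0 < 1 / c := by positivity
        linarith

lemma measurable_kernel (c : ℝ) : Measurable (kernel c) := by
  unfold kernel
  fun_prop

lemma intervalIntegrable_kernel {c : ℝ} (hc : 0 < c) :
    IntervalIntegrable (kernel c) volume 0 1 := by
  rw [intervalIntegrable_iff_integrableOn_Ioc_of_le zero_le_one]
  refine Integrable.mono' (g := fun _ => 1 + 1 / c) (integrableOn_const measure_Ioc_lt_top.ne)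
    (measurable_kernel c).aestronglyMeasurable ?_
  refine (ae_restrict_iff' measurableSet_Ioc).2 (Filter.Eventually.of_forall fun u hu => ?_)
  rw [Real.norm_eq_abs, abs_of_nonneg (kernel_nonneg c hu.1.le)]
  exact kernel_le hc hu

lemma strictAnti_kernel {u : ℝ} (hu : u ∈ Ioo (0:ℝ) 1) : StrictAnti (fun c => kernel c u) := by
  intro c c' hcc'
  have hneg : 1 - 1 / u < 0 := by rw [sub_neg, lt_div_iff₀ hu.1]; linarith [hu.2]
  exact div_lt_div_of_pos_right (exp_lt_exp.2 (mul_lt_mul_of_neg_left hcc' hneg)) hu.1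

lemma strictAntiOn_kernelIntegral : StrictAntiOn kernelIntegral (Ioi 0) :=
  fun _ hc _ hc' hcc' => intervalIntegral_lt_intervalIntegral_of_lt_on_Ioo zero_lt_one
    (intervalIntegrable_kernel hc') (intervalIntegrable_kernel hc)
    fun _ hu => strictAnti_kernel hu hcc'

lemma continuousOn_kernelIntegral : ContinuousOn kernelIntegral (Ioi 0) := by
  intro c₀ hc₀
  have hhalf : 0 < c₀ / 2 := half_pos hc₀
  refine (intervalIntegral.continuousAt_of_dominated_interval
    (bound := fun _ => 1 + 1 / (c₀ / 2)) ?_ ?_ intervalIntegrable_const ?_).continuousWithinAt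
  · exact Filter.Eventually.of_forall fun c => (measurable_kernel c).aestronglyMeasurable
  · filter_upwards [Ioi_mem_nhds (half_lt_self hc₀)] with c hc
    refine Filter.Eventually.of_forall fun u hu => ?_
    rw [uIoc_of_le zero_le_one] at hu
    rw [Real.norm_eq_abs, abs_of_nonneg (kernel_nonneg c hu.1.le)]
    calc kernel c u ≤ 1 + 1 / c := kernel_le (hhalf.trans hc) hu
      _ ≤ 1 + 1 / (c₀ / 2) := by gcongr; exact hc.le
  · exact Filter.Eventually.of_forall fun u _ => by unfold kernel; fun_prop

lemma kernel_one_lt_one {u : ℝ} (hu : u ∈ Ioo (0:ℝ) 1) : kernel 1 u < 1 := by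
  obtain ⟨hu0, hu1⟩ := hu
  have hlog := log_lt_sub_one_of_pos (inv_pos.2 hu0) (inv_ne_one.2 hu1.ne)
  rw [log_inv] at hlog
  rw [kernel, div_lt_one hu0, mul_one, one_div]
  calc exp (1 - u⁻¹) < exp (log u) := exp_lt_exp.2 (by linarith)
    _ = u := exp_log hu0

lemma kernelIntegral_one_lt_one : kernelIntegral 1 < 1 :=
  calc kernelIntegral 1 < ∫ _ in (0:ℝ)..1, (1:ℝ) :=
        intervalIntegral_lt_intervalIntegral_of_lt_on_Ioo zero_lt_one
          (intervalIntegrable_kernel one_pos) intervalIntegrable_const fun _ hu => kernel_one_lt_one hu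
    _ = 1 := by simp

lemma exp_neg_one_mul_log_inv_le_kernelIntegral {ε : ℝ} (hε0 : 0 < ε) (hε1 : ε ≤ 1) :
    exp (-1) * log ε⁻¹ ≤ kernelIntegral ε := by
  have hinv : IntervalIntegrable (fun u : ℝ => exp (-1) * u⁻¹) volume ε 1 :=
    (intervalIntegral.intervalIntegrable_inv (fun u hu => by
      rw [uIcc_of_le hε1] at hu; exact (hε0.trans_le hu.1).ne') continuousOn_id).const_mul _
  have hker : IntervalIntegrable (kernel ε) volume ε 1 :=
    (intervalIntegrable_kernel hε0).mono_set (by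
      rw [uIcc_of_le hε1, uIcc_of_le zero_le_one]; exact Icc_subset_Icc hε0.le le_rfl)
  calc exp (-1) * log ε⁻¹ = ∫ u in ε..1, exp (-1) * u⁻¹ := by
        rw [intervalIntegral.integral_const_mul, integral_inv_of_pos hε0 one_pos, one_div]
    _ ≤ ∫ u in ε..1, kernel ε u := by
        refine intervalIntegral.integral_mono_on hε1 hinv hker fun u hu => ?_
        have hu0 : 0 < u := hε0.trans_le hu.1
        have hεu : ε / u ≤ 1 := (div_le_one hu0).2 hu.1
        rw [kernel, div_eq_mul_inv]
        gcongr
        calc (-1 : ℝ) ≤ ε - ε / u := by linarith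
          _ = (1 - 1 / u) * ε := by ring
    _ ≤ kernelIntegral ε :=
        intervalIntegral.integral_mono_interval hε0.le hε1 le_rfl
          ((ae_restrict_iff' measurableSet_Ioc).2
            (Filter.Eventually.of_forall fun u hu => kernel_nonneg ε hu.1.le))
          (intervalIntegrable_kernel hε0)

lemma one_lt_kernelIntegral_exp_neg_three : 1 < kernelIntegral (exp (-3)) := by
  have hbound := exp_neg_one_mul_log_inv_le_kernelIntegral (exp_pos (-3))
    (exp_le_one_iff.2 (by norm_num))
  rw [← exp_neg, neg_neg, log_exp] at hbound
  have h3e : 1 < exp (-1) * 3 := by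
    rw [exp_neg, inv_mul_eq_div, one_lt_div (exp_pos 1)]
    exact exp_one_lt_three
  linarith

theorem strictAnti_and_unique_alpha :
    StrictAntiOn (fun a : ℝ => ∫ u in (0:ℝ)..1, Real.exp ((1 - 1/u) * Real.log a) / u)
        (Set.Ioi 1) ∧
      ∃! α : ℝ, 1 < α ∧
        (∫ u in (0:ℝ)..1, Real.exp ((1 - 1/u) * Real.log α) / u) = 1 := by
  have hanti : StrictAntiOn (kernelIntegral ∘ log) (Ioi 1) :=
    strictAntiOn_kernelIntegral.comp_strictMonoOn
      (strictMonoOn_log.mono (Ioi_subset_Ioi zero_le_one)) fun _ ha => log_pos ha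
  refine ⟨hanti, ?_⟩
  obtain ⟨c, hc, hGc⟩ := intermediate_value_Icc' (exp_le_one_iff.2 (by norm_num))
    (continuousOn_kernelIntegral.mono fun _ hc => (exp_pos _).trans_le hc.1)
    ⟨kernelIntegral_one_lt_one.le, one_lt_kernelIntegral_exp_neg_three.le⟩
  have hα : 1 < exp c := one_lt_exp_iff.2 ((exp_pos _).trans_le hc.1)
  have hGα : (kernelIntegral ∘ log) (exp c) = 1 := by rw [Function.comp_apply, log_exp, hGc]
  exact ⟨exp c, ⟨hα, hGα⟩, fun β hβ => hanti.injOn hβ.1 hα (hβ.2.trans hGα.symm)⟩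
end

section
/- Define h(a,b) = ∫₀^b (a/z)·e^{-a/z} dz for a, b > 0. If α > 1 and β = α/ln α satisfy h(α, β) = 1, then ∂h/∂a(α, β) = 0. -/
/-!
The substitution `z = a t` gives `h(a, b) = a · E(b / a)` with `E(u) = ∫₀^u t⁻¹ e^{-1/t} dt`,
so `∂h/∂a (a, b) = E(b/a) - (b/a) E'(b/a) = h(a, b)/a - e^{-a/b}`. At `(α, β)` both terms
equal `1/α`: the first because `h(α, β) = 1`, the second because `α / β = log α`.
-/

open Real Filter Set intervalIntegral Polynomial
open scoped Topology

theorem expNegInvGlue_of_pos {x : ℝ} (hx : 0 < x) : expNegInvGlue x = exp (-x⁻¹) := by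
  simp [expNegInvGlue, hx.not_ge]

-- Writing `E`'s integrand through `expNegInvGlue` makes it continuous on all of `ℝ`.
theorem continuous_inv_mul_expNegInvGlue : Continuous fun t : ℝ => t⁻¹ * expNegInvGlue t := by
  simpa using expNegInvGlue.continuous_polynomial_eval_inv_mul X

theorem integral_div_mul_exp_neg_div_eq {a b : ℝ} (ha : 0 < a) (hb : 0 ≤ b) :
    ∫ z in (0:ℝ)..b, a / z * exp (-a / z) = a * ∫ t in (0:ℝ)..b / a, t⁻¹ * expNegInvGlue t := by
  have hsubst := integral_comp_div (a := 0) (b := b) (fun t => t⁻¹ * expNegInvGlue t) ha.ne'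
  rw [zero_div, smul_eq_mul] at hsubst
  rw [← hsubst]
  refine integral_congr fun z hz => ?_
  rcases (uIcc_of_le hb ▸ hz).1.eq_or_lt with rfl | hz
  · simp
  · simp [expNegInvGlue_of_pos (div_pos hz ha), neg_div]

theorem hasDerivAt_integral_div_mul_exp_neg_div {a b : ℝ} (ha : 0 < a) (hb : 0 < b) :
    HasDerivAt (fun x => ∫ z in (0:ℝ)..b, x / z * exp (-x / z))
      ((∫ z in (0:ℝ)..b, a / z * exp (-a / z)) / a - exp (-a / b)) a := by
  set E := fun u : ℝ => ∫ t in (0:ℝ)..u, t⁻¹ * expNegInvGlue t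
  have hE : HasDerivAt E ((b / a)⁻¹ * expNegInvGlue (b / a)) (b / a) :=
    (continuous_inv_mul_expNegInvGlue.integral_hasStrictDerivAt 0 _).hasDerivAt
  have hscaled := (hasDerivAt_id a).mul (hE.comp a ((hasDerivAt_inv ha.ne').const_mul b))
  have hsubst : (fun x => ∫ z in (0:ℝ)..b, x / z * exp (-x / z)) =ᶠ[𝓝 a]
      fun x => x * E (b / x) := by
    filter_upwards [eventually_gt_nhds ha] with x hx
    exact integral_div_mul_exp_neg_div_eq hx hb.le
  refine (hscaled.congr_of_eventuallyEq hsubst).congr_deriv ?_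
  rw [integral_div_mul_exp_neg_div_eq ha hb.le, expNegInvGlue_of_pos (div_pos hb ha), inv_div]
  simp only [Function.comp_apply, id, E]
  field_simp
  ring

theorem deriv_h_at_alpha_beta_eq_zero (α β : ℝ) (hα : 1 < α)
    (hβ : β = α / Real.log α)
    (h1 : (∫ z in (0:ℝ)..β, (α / z) * Real.exp (-α / z)) = 1) :
    HasDerivAt (fun a : ℝ => ∫ z in (0:ℝ)..β, (a / z) * Real.exp (-a / z)) 0 α := by
  have hα0 : 0 < α := one_pos.trans hα
  have hβ0 : 0 < β := hβ ▸ div_pos hα0 (log_pos hα)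
  have hexp : exp (-α / β) = α⁻¹ := by
    rw [hβ, neg_div, div_div_cancel₀ hα0.ne', exp_neg, exp_log hα0]
  simpa [h1, hexp] using hasDerivAt_integral_div_mul_exp_neg_div hα0 hβ0
end

section
/- Let α ≈ 1.545 be the unique solution of ∫₀^β (α/z)e^{-α/z} dz = 1 with β = α/ln α. Then for every β' < β there exists δ > 0 such that ∫₀^{β'} (a/z)e^{-a/z} dz ≤ 1 - δ for all a ≥ 0. -/
/-!
The substitution `t = a / z` gives `∫₀^b (a/z) e^{-a/z} dz = a E₁(a/b) = b g(a/b)`, where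
`E₁(x) = ∫ₓ^∞ e^{-t}/t dt` and `g(x) = x E₁(x)`. Since `g' = E₁(x) - e^{-x}` is decreasing on
`(0, 1]` and negative on `(1, ∞)`, `g` is maximal at the zero of `g'`; the normalisation
`h(α, β) = 1` says exactly that this zero is `log α = α / β`. Hence for `0 < β' < β` and every
`a ≥ 0`, `h(a, β') = β' g(a/β') ≤ β' g(α/β) = β'/β`.
-/

open Real Set MeasureTheory Filter

noncomputable def expIntegralE1 (x : ℝ) : ℝ := ∫ t in Ioi x, exp (-t) / t

lemma continuousOn_exp_neg_div : ContinuousOn (fun t => exp (-t) / t) (Ioi 0) :=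
  fun _ ht => (continuous_exp.comp continuous_neg).continuousWithinAt.div
    continuousWithinAt_id (ne_of_gt ht)

lemma integrableOn_exp_neg_div_Ioi {x : ℝ} (hx : 0 < x) :
    IntegrableOn (fun t => exp (-t) / t) (Ioi x) := by
  refine ((integrableOn_exp_neg_Ioi x).mul_const x⁻¹).mono'
    ((continuousOn_exp_neg_div.mono (Ioi_subset_Ioi hx.le)).aestronglyMeasurable
      measurableSet_Ioi) ?_
  filter_upwards [ae_restrict_mem measurableSet_Ioi] with t ht
  rw [norm_of_nonneg (div_nonneg (exp_pos _).le (hx.trans ht).le), div_eq_mul_inv]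
  gcongr
  exact ht.le

lemma expIntegralE1_le {x : ℝ} (hx : 0 < x) : expIntegralE1 x ≤ exp (-x) / x := by
  calc expIntegralE1 x ≤ ∫ t in Ioi x, exp (-t) * x⁻¹ := by
        refine setIntegral_mono_on (integrableOn_exp_neg_div_Ioi hx)
          ((integrableOn_exp_neg_Ioi x).mul_const x⁻¹) measurableSet_Ioi fun t ht => ?_
        rw [div_eq_mul_inv]; gcongr; exact ht.le
    _ = exp (-x) / x := by rw [integral_mul_const, integral_exp_neg_Ioi, div_eq_mul_inv]

lemma expIntegralE1_lt_exp_neg {x : ℝ} (hx : 1 < x) : expIntegralE1 x < exp (-x) :=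
  (expIntegralE1_le (by linarith)).trans_lt (div_lt_self (exp_pos _) hx)

lemma hasDerivAt_expIntegralE1 {x : ℝ} (hx : 0 < x) :
    HasDerivAt expIntegralE1 (-(exp (-x) / x)) x := by
  have hsplit : ∀ y ∈ Ioi (0 : ℝ),
      expIntegralE1 y = (∫ t in y..1, exp (-t) / t) + expIntegralE1 1 := fun y hy =>
    (intervalIntegral.integral_interval_add_Ioi (integrableOn_exp_neg_div_Ioi hy)
      (integrableOn_exp_neg_div_Ioi one_pos)).symm
  refine HasDerivAt.congr_of_eventuallyEq ?_ (eventually_of_mem (Ioi_mem_nhds hx) hsplit)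
  refine (intervalIntegral.integral_hasDerivAt_left ?_ ?_ ?_).add_const _
  · exact (continuousOn_exp_neg_div.mono fun t ht => (lt_min hx one_pos).trans_le ht.1)
      |>.intervalIntegrable
  · exact continuousOn_exp_neg_div.stronglyMeasurableAtFilter isOpen_Ioi x hx
  · exact continuousOn_exp_neg_div.continuousAt (Ioi_mem_nhds hx)

lemma hasDerivAt_mul_expIntegralE1 {x : ℝ} (hx : 0 < x) :
    HasDerivAt (fun y => y * expIntegralE1 y) (expIntegralE1 x - exp (-x)) x :=
  ((hasDerivAt_id' x).mul (hasDerivAt_expIntegralE1 hx)).congr_deriv (by field_simp; ring)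

lemma hasDerivAt_expIntegralE1_sub_exp_neg {x : ℝ} (hx : 0 < x) :
    HasDerivAt (fun y => expIntegralE1 y - exp (-y)) (exp (-x) * (1 - x⁻¹)) x :=
  ((hasDerivAt_expIntegralE1 hx).sub (hasDerivAt_neg x).exp).congr_deriv (by ring)

lemma antitoneOn_expIntegralE1_sub_exp_neg :
    AntitoneOn (fun y => expIntegralE1 y - exp (-y)) (Ioc 0 1) := by
  refine antitoneOn_of_hasDerivWithinAt_nonpos (convex_Ioc 0 1)
    (fun y hy => (hasDerivAt_expIntegralE1_sub_exp_neg hy.1).continuousAt.continuousWithinAt)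
    (fun y hy => (hasDerivAt_expIntegralE1_sub_exp_neg ?_).hasDerivWithinAt) fun y hy => ?_
  all_goals rw [interior_Ioc] at hy
  · exact hy.1
  · have : 1 ≤ y⁻¹ := one_le_inv₀ hy.1 |>.2 hy.2.le
    exact mul_nonpos_of_nonneg_of_nonpos (exp_pos _).le (by linarith)

lemma isMaxOn_mul_expIntegralE1 {x₀ : ℝ} (hx₀ : 0 < x₀) (h : expIntegralE1 x₀ = exp (-x₀)) :
    IsMaxOn (fun x => x * expIntegralE1 x) (Ioi 0) x₀ := by
  have hx₀_le : x₀ ≤ 1 := not_lt.1 fun h1 => (expIntegralE1_lt_exp_neg h1).ne h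
  have hx₀_mem : x₀ ∈ Ioc 0 1 := ⟨hx₀, hx₀_le⟩
  have hpos : ∀ x ∈ Ioo 0 x₀, 0 ≤ expIntegralE1 x - exp (-x) := fun x hx => by
    simpa [h] using antitoneOn_expIntegralE1_sub_exp_neg ⟨hx.1, hx.2.le.trans hx₀_le⟩ hx₀_mem
      hx.2.le
  have hneg : ∀ x ∈ Ioi x₀, expIntegralE1 x - exp (-x) ≤ 0 := fun x hx => by
    rcases le_or_gt x 1 with hx1 | hx1
    · simpa [h] using antitoneOn_expIntegralE1_sub_exp_neg hx₀_mem ⟨hx₀.trans hx, hx1⟩ hx.le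
    · linarith [expIntegralE1_lt_exp_neg hx1]
  have hmono : MonotoneOn (fun x => x * expIntegralE1 x) (Ioc 0 x₀) := by
    refine monotoneOn_of_hasDerivWithinAt_nonneg (f' := fun x => expIntegralE1 x - exp (-x))
      (convex_Ioc 0 x₀)
      (fun y hy => (hasDerivAt_mul_expIntegralE1 hy.1).continuousAt.continuousWithinAt)
      (fun y hy => ?_) fun y hy => ?_ <;> rw [interior_Ioc] at hy
    · exact (hasDerivAt_mul_expIntegralE1 hy.1).hasDerivWithinAt
    · exact hpos y hy
  have hanti : AntitoneOn (fun x => x * expIntegralE1 x) (Ici x₀) := by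
    refine antitoneOn_of_hasDerivWithinAt_nonpos (f' := fun x => expIntegralE1 x - exp (-x))
      (convex_Ici x₀)
      (fun y hy => (hasDerivAt_mul_expIntegralE1 (hx₀.trans_le hy)).continuousAt
        |>.continuousWithinAt)
      (fun y hy => ?_) fun y hy => ?_ <;> rw [interior_Ici] at hy
    · exact (hasDerivAt_mul_expIntegralE1 (hx₀.trans hy)).hasDerivWithinAt
    · exact hneg y hy
  refine isMaxOn_iff.2 fun x hx => ?_
  rcases le_total x x₀ with hle | hle
  · exact hmono ⟨hx, hle⟩ ⟨hx₀, le_rfl⟩ hle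
  · exact hanti self_mem_Ici hle hle

lemma integral_div_mul_exp_neg_div {a b : ℝ} (ha : 0 < a) (hb : 0 < b) :
    ∫ z in (0 : ℝ)..b, a / z * exp (-a / z) = a * expIntegralE1 (a / b) := by
  have hab : 0 < a / b := div_pos ha hb
  have himage : (fun t => a / t) '' Ioi (a / b) = Ioo 0 b := by
    ext y
    constructor
    · rintro ⟨t, ht, rfl⟩
      have ht0 : 0 < t := hab.trans ht
      exact ⟨div_pos ha ht0, (div_lt_iff₀ ht0).2 (by rw [mem_Ioi, div_lt_iff₀ hb] at ht; linarith)⟩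
    · rintro ⟨hy0, hyb⟩
      exact ⟨a / y, div_lt_div_of_pos_left ha hy0 hyb, div_div_cancel₀ ha.ne'⟩
  have hderiv : ∀ t ∈ Ioi (a / b),
      HasDerivWithinAt (fun t => a / t) (-(a / t ^ 2)) (Ioi (a / b)) t := fun t ht => by
    simpa [div_eq_mul_inv] using
      ((hasDerivAt_inv (hab.trans ht).ne').const_mul a).hasDerivWithinAt
  have hinj : InjOn (fun t => a / t) (Ioi (a / b)) := fun s _ t _ hst => by
    simpa [div_eq_mul_inv, ha.ne'] using hst
  rw [intervalIntegral.integral_of_le hb.le, integral_Ioc_eq_integral_Ioo, ← himage,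
    integral_image_eq_integral_abs_deriv_smul measurableSet_Ioi hderiv hinj, expIntegralE1,
    ← integral_const_mul]
  refine setIntegral_congr_fun measurableSet_Ioi fun t ht => ?_
  have ht0 : 0 < t := hab.trans ht
  rw [abs_neg, abs_of_pos (by positivity), smul_eq_mul, div_div_cancel₀ ha.ne', neg_div,
    div_div_cancel₀ ha.ne']
  field_simp

/-- For `b < 0` the integrand is at least `|1/z|` near `0`, so the integral diverges and its Lean
value is the junk value `0`. -/
lemma integral_div_mul_exp_neg_div_of_nonpos {a b : ℝ} (ha : 0 ≤ a) (hb : b ≤ 0) :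
    ∫ z in (0 : ℝ)..b, a / z * exp (-a / z) = 0 := by
  rcases ha.eq_or_lt with rfl | ha
  · simp
  rcases hb.eq_or_lt with rfl | hb
  · simp
  refine intervalIntegral.integral_undef fun hint => ?_
  have hinv : IntervalIntegrable (fun z => z⁻¹) volume 0 b := by
    refine (hint.const_mul a⁻¹).mono_fun (by fun_prop) ?_
    filter_upwards [ae_restrict_mem measurableSet_uIoc] with z hz
    have hz0 : z ≤ 0 := hz.2.trans (max_le le_rfl hb.le)
    have hexp : 1 ≤ exp (-a / z) := one_le_exp (div_nonneg_of_nonpos (by linarith) hz0)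
    rw [← mul_assoc, ← div_eq_inv_mul, div_div_cancel_left' ha.ne', norm_mul, norm_inv,
      norm_of_nonneg (exp_pos _).le]
    exact le_mul_of_one_le_right (by positivity) hexp
  simp [intervalIntegrable_inv_iff, hb.ne'] at hinv

lemma integral_div_mul_exp_neg_div_le {x₀ a b : ℝ} (hx₀ : 0 < x₀)
    (h : expIntegralE1 x₀ = exp (-x₀)) (ha : 0 ≤ a) (hb : 0 < b) :
    ∫ z in (0 : ℝ)..b, a / z * exp (-a / z) ≤ b * (x₀ * expIntegralE1 x₀) := by
  rcases ha.eq_or_lt with rfl | ha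
  · simp only [zero_div, zero_mul, intervalIntegral.integral_zero, h]
    positivity
  rw [integral_div_mul_exp_neg_div ha hb]
  calc a * expIntegralE1 (a / b) = b * (a / b * expIntegralE1 (a / b)) := by field_simp
    _ ≤ b * (x₀ * expIntegralE1 x₀) := mul_le_mul_of_nonneg_left
      (isMaxOn_iff.1 (isMaxOn_mul_expIntegralE1 hx₀ h) _ (div_pos ha hb)) hb.le

theorem integral_lt_one_for_smaller_beta (α β : ℝ) (hα : 1 < α)
    (hβ : β = α / Real.log α)
    (h1 : (∫ z in (0:ℝ)..β, (α / z) * Real.exp (-α / z)) = 1) :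
    ∀ β' : ℝ, β' < β → ∃ δ : ℝ, 0 < δ ∧ ∀ a : ℝ, 0 ≤ a →
      (∫ z in (0:ℝ)..β', (a / z) * Real.exp (-a / z)) ≤ 1 - δ := by
  have hα0 : 0 < α := by linarith
  have hlog : 0 < log α := log_pos hα
  have hβ0 : 0 < β := hβ ▸ div_pos hα0 hlog
  have hE1 : α * expIntegralE1 (log α) = 1 := by
    rwa [integral_div_mul_exp_neg_div hα0 hβ0, hβ, div_div_cancel₀ hα0.ne'] at h1
  have hcrit : expIntegralE1 (log α) = exp (-log α) := by
    rw [exp_neg, exp_log hα0]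
    exact eq_inv_of_mul_eq_one_right hE1
  intro β' hβ'
  rcases le_or_gt β' 0 with hβ'0 | hβ'0
  · exact ⟨1, one_pos, fun a ha => by
      rw [integral_div_mul_exp_neg_div_of_nonpos ha hβ'0]; norm_num⟩
  refine ⟨1 - β' / β, by rwa [sub_pos, div_lt_one hβ0], fun a ha => ?_⟩
  calc _ ≤ β' * (log α * expIntegralE1 (log α)) :=
        integral_div_mul_exp_neg_div_le hlog hcrit ha hβ'0
    _ = 1 - (1 - β' / β) := by
      rw [hcrit, exp_neg, exp_log hα0, hβ]
      field_simp
      ring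
end

section
/- Consider a bit string of length n with ℓ ones, where ℓ ≤ n/20. Choose a uniformly random subset K of positions with |K| = k, where 2 ≤ k ≤ n/10, and flip all bits in K. Fix a position i that currently holds a one. Then the probability that bit i is flipped and the number of ones strictly decreases is at most 160ℓ/n². -/
/-!
A flip set `K` that contains `i` and lowers the number of ones contains at least `m = ⌊k/2⌋`
ones besides `i`. A union bound over the choices of these `m + 1` ones, each set of them lying
in `K` with probability `C(k, m+1) / C(n, m+1)`, bounds the probability by
`C(ℓ-1, m) C(k, m+1) / C(n, m+1) ≤ (ℓ/n)^m (m+1) C(k, m+1) / (n - m)`.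
Since `(m+1) C(k, m+1) ≤ k 2^k ≤ 2·20^m` and `20 ℓ ≤ n`, this is at most
`2 (20 ℓ/n)^m / (n - m) ≤ 40 ℓ / (n (n - m))`, and `n - m ≥ n/4`.
-/

open Finset

namespace Nat

theorem pow_mul_descFactorial_le_pow_mul_descFactorial {a n : ℕ} (h : a ≤ n) (m : ℕ) :
    n ^ m * a.descFactorial m ≤ a ^ m * n.descFactorial m := by
  induction m with
  | zero => simp
  | succ m ih =>
    have step : n * (a - m) ≤ a * (n - m) := by
      rw [Nat.mul_sub, Nat.mul_sub, Nat.mul_comm n a]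
      exact Nat.sub_le_sub_left (Nat.mul_le_mul_right m h) _
    rw [descFactorial_succ, descFactorial_succ, pow_succ, pow_succ]
    calc n ^ m * n * ((a - m) * a.descFactorial m)
        = (n * (a - m)) * (n ^ m * a.descFactorial m) := by ring
      _ ≤ (a * (n - m)) * (a ^ m * n.descFactorial m) := Nat.mul_le_mul step ih
      _ = a ^ m * a * ((n - m) * n.descFactorial m) := by ring

theorem pow_mul_choose_le_pow_mul_choose {a n : ℕ} (h : a ≤ n) (m : ℕ) :
    n ^ m * a.choose m ≤ a ^ m * n.choose m := by
  have := pow_mul_descFactorial_le_pow_mul_descFactorial h m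
  rw [descFactorial_eq_factorial_mul_choose, descFactorial_eq_factorial_mul_choose,
    mul_left_comm, mul_left_comm (a ^ m)] at this
  exact Nat.le_of_mul_le_mul_left this (factorial_pos m)

theorem succ_mul_choose_succ_le_two_mul_twenty_pow {k m : ℕ} (hk : k ≤ 2 * m + 1) :
    (m + 1) * k.choose (m + 1) ≤ 2 * 20 ^ m := by
  rcases lt_or_ge k (m + 1) with hkm | hmk
  · simp [choose_eq_zero_of_lt hkm]
  have bernoulli : 1 + m * 4 ≤ 5 ^ m := one_add_le_pow_of_two_add_nonneg (a := 4) (by norm_num) m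
  calc (m + 1) * k.choose (m + 1) ≤ k * 2 ^ k := Nat.mul_le_mul hmk (choose_le_two_pow k _)
    _ ≤ (2 * m + 1) * 2 ^ (2 * m + 1) := Nat.mul_le_mul hk (Nat.pow_le_pow_right two_pos hk)
    _ ≤ 5 ^ m * 2 ^ (2 * m + 1) := Nat.mul_le_mul_right _ (by omega)
    _ = 2 * 20 ^ m := by rw [pow_succ, pow_mul, show 20 = 5 * 2 ^ 2 by rfl, mul_pow]; ring

theorem choose_div_choose_le_div_pow {α : Type*} [Field α] [LinearOrder α]
    [IsStrictOrderedRing α] {a n m : ℕ} (ha : a ≤ n) (hm : m ≤ n) :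
    (a.choose m : α) / n.choose m ≤ ((a : α) / n) ^ m := by
  rcases n.eq_zero_or_pos with rfl | hn
  · obtain rfl : m = 0 := by omega
    simp
  rw [div_pow, div_le_div_iff₀ (by exact_mod_cast choose_pos hm) (by positivity)]
  have := pow_mul_choose_le_pow_mul_choose ha m
  rw [mul_comm] at this
  exact_mod_cast this

end Nat

section

variable {α : Type*} [Fintype α] [DecidableEq α] {ones : Finset α} {i : α} {k m : ℕ}

theorem card_filter_mem_lt_card_inter_le (hi : i ∈ ones) (hmk : m + 1 ≤ k) :
    #{K ∈ (univ : Finset α).powersetCard k | i ∈ K ∧ m < #(K ∩ ones)} ≤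
      (#ones - 1).choose m * (Fintype.card α - (m + 1)).choose (k - (m + 1)) := by
  have hcover : {K ∈ (univ : Finset α).powersetCard k | i ∈ K ∧ m < #(K ∩ ones)} ⊆
      ((ones.erase i).powersetCard m).biUnion
        fun T => {K ∈ (univ : Finset α).powersetCard k | insert i T ⊆ K} := by
    intro K hK
    obtain ⟨hK, hiK, hmK⟩ := mem_filter.1 hK
    obtain ⟨T, hTK, hT⟩ := exists_subset_card_eq (s := (K ∩ ones).erase i) (n := m)
      (by rw [card_erase_of_mem (mem_inter.2 ⟨hiK, hi⟩)]; omega)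
    refine mem_biUnion.2 ⟨T, mem_powersetCard.2 ⟨?_, hT⟩, mem_filter.2 ⟨hK, ?_⟩⟩
    · exact hTK.trans (erase_subset_erase _ inter_subset_right)
    · exact insert_subset hiK (hTK.trans ((erase_subset _ _).trans inter_subset_left))
  calc _ ≤ _ := card_le_card hcover
    _ ≤ ∑ T ∈ (ones.erase i).powersetCard m,
          #{K ∈ (univ : Finset α).powersetCard k | insert i T ⊆ K} :=
        card_biUnion_le
    _ = ∑ T ∈ (ones.erase i).powersetCard m,
          (Fintype.card α - (m + 1)).choose (k - (m + 1)) := by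
        refine sum_congr rfl fun T hT => ?_
        obtain ⟨hT, hTcard⟩ := mem_powersetCard.1 hT
        have hcard : #(insert i T) = m + 1 := by
          rw [card_insert_of_notMem fun h => notMem_erase i ones (hT h), hTcard]
        rw [card_filter_powersetCard_subset _ _ _ (subset_univ _) (hcard ▸ hmk), hcard, card_univ]
    _ = _ := by rw [sum_const, card_powersetCard, card_erase_of_mem hi, smul_eq_mul]

theorem card_filter_mem_lt_card_inter_div_choose_le (hi : i ∈ ones) (hmk : m + 1 ≤ k)
    (hk : k ≤ Fintype.card α) :
    (#{K ∈ (univ : Finset α).powersetCard k | i ∈ K ∧ m < #(K ∩ ones)} : ℝ) /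
        (Fintype.card α).choose k ≤
      (#ones - 1).choose m * k.choose (m + 1) / (Fintype.card α).choose (m + 1) := by
  set n := Fintype.card α
  rw [div_le_div_iff₀ (mod_cast Nat.choose_pos hk) (mod_cast Nat.choose_pos (hmk.trans hk))]
  exact_mod_cast calc
    #{K ∈ (univ : Finset α).powersetCard k | i ∈ K ∧ m < #(K ∩ ones)} * n.choose (m + 1)
      ≤ (#ones - 1).choose m * (n - (m + 1)).choose (k - (m + 1)) * n.choose (m + 1) :=
        Nat.mul_le_mul_right _ (card_filter_mem_lt_card_inter_le hi hmk)
    _ = (#ones - 1).choose m * k.choose (m + 1) * n.choose k := by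
        rw [mul_assoc, mul_assoc, mul_comm (k.choose _), Nat.choose_mul hmk, mul_comm (n.choose _)]

end

theorem choose_mul_choose_div_choose_le {ℓ n k m : ℕ} (hℓ : 20 * ℓ ≤ n) (hm : 1 ≤ m)
    (hkm : k ≤ 2 * m + 1) (hmn : 4 * m ≤ 3 * n) :
    (ℓ.choose m : ℝ) * k.choose (m + 1) / n.choose (m + 1) ≤ 160 * ℓ / n ^ 2 := by
  have hn : (0 : ℝ) < n := by exact_mod_cast (by omega : 0 < n)
  have hnm : (n : ℝ) ≤ 4 * (n - m) := by
    have : ((4 * m : ℕ) : ℝ) ≤ (3 * n : ℕ) := by exact_mod_cast hmn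
    push_cast at this; linarith
  have hnm' : (0 : ℝ) < n - m := by linarith
  have hsucc : (n.choose (m + 1) : ℝ) = n.choose m * (n - m) / (m + 1) := by
    rw [eq_div_iff (by positivity), ← Nat.cast_sub (by omega : m ≤ n)]
    exact_mod_cast Nat.choose_succ_right_eq n m
  have hratio : (ℓ.choose m : ℝ) / n.choose m ≤ ((ℓ : ℝ) / n) ^ m :=
    Nat.choose_div_choose_le_div_pow (by omega) (by omega)
  have hk : (((m : ℝ) + 1) * k.choose (m + 1)) ≤ 2 * 20 ^ m := by
    exact_mod_cast Nat.succ_mul_choose_succ_le_two_mul_twenty_pow hkm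
  have hdensity : 20 * (ℓ : ℝ) / n ≤ 1 := by
    rw [div_le_one hn]; exact_mod_cast hℓ
  calc (ℓ.choose m : ℝ) * k.choose (m + 1) / n.choose (m + 1)
      = ℓ.choose m / n.choose m * ((m + 1) * k.choose (m + 1)) / (n - m) := by
        rw [hsucc]; field_simp
    _ ≤ ((ℓ : ℝ) / n) ^ m * (2 * 20 ^ m) / (n - m) := by gcongr
    _ = 2 * (20 * ℓ / n) ^ m / (n - m) := by ring
    _ ≤ 2 * (20 * ℓ / n) / (n - m) := by
        gcongr; exact pow_le_of_le_one (by positivity) hdensity (by omega)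
    _ ≤ 160 * ℓ / n ^ 2 := by
        rw [div_le_div_iff₀ hnm' (by positivity)]; field_simp; nlinarith

theorem multi_bit_flip_improvement_probability
    (n ℓ k : ℕ) (ones : Finset (Fin n)) (i : Fin n)
    (hones : ones.card = ℓ) (hi : i ∈ ones)
    (hℓ : (ℓ:ℝ) ≤ (n:ℝ)/20) (hk2 : 2 ≤ k) (hkn : (k:ℝ) ≤ (n:ℝ)/10) :
    (((Finset.univ.powersetCard k).filter
        (fun K : Finset (Fin n) => i ∈ K ∧ k < 2 * (K ∩ ones).card)).card : ℝ)
        / (Nat.choose n k : ℝ)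
      ≤ 160 * ℓ / (n:ℝ)^2 := by
  have h20ℓ : 20 * ℓ ≤ n := by
    exact_mod_cast (show ((20 * ℓ : ℕ) : ℝ) ≤ n by push_cast; linarith)
  have h10k : 10 * k ≤ n := by
    exact_mod_cast (show ((10 * k : ℕ) : ℝ) ≤ n by push_cast; linarith)
  have hmajority : ∀ K : Finset (Fin n), k < 2 * #(K ∩ ones) ↔ k / 2 < #(K ∩ ones) :=
    fun K => by omega
  simp_rw [hmajority]
  calc _ ≤ ((ℓ - 1).choose (k / 2) : ℝ) * k.choose (k / 2 + 1) / n.choose (k / 2 + 1) := by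
        simpa only [hones, Fintype.card_fin] using
          card_filter_mem_lt_card_inter_div_choose_le hi (m := k / 2) (by omega)
            (by simp only [Fintype.card_fin]; omega)
    _ ≤ (ℓ.choose (k / 2) : ℝ) * k.choose (k / 2 + 1) / n.choose (k / 2 + 1) := by
        gcongr; exact Nat.sub_le ℓ 1
    _ ≤ 160 * ℓ / n ^ 2 :=
        choose_mul_choose_div_choose_le h20ℓ (by omega) (by omega) (by omega)
end

section
/- Let w : Fin n → ℝ with all w_i > 0, define f(x) = ∑_i w_i x_i for x ∈ {0,1}ⁿ. Fix a nonempty set I ⊆ Fin n of positions to flip, let x be a uniformly random point of {0,1}ⁿ, and let y be x with all bits in I flipped. Then P(f(y) > f(x)) = (1 - P(f(y) = f(x)))/2, and P(f(y) = f(x)) ≤ 1/2; hence P(f(y) > f(x)) ≥ (1 - P(f(y)=f(x)))/4 ≥ 1/4. -/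
open scoped Classical

/-!
Write `g x = f (flip x) - f x`. Complementing every bit of `x` negates `g`, so strict gains and
strict losses are equally frequent, giving `P(gain) = (1 - P(tie)) / 2`. Toggling one bit `i ∈ I`
changes `g` by `±2 wᵢ ≠ 0`, so this involution maps ties to non-ties and `P(tie) ≤ 1/2`.
-/

open Finset

section Counting

variable {α β : Type*} [Fintype α]

theorem card_filter_pos_eq_card_filter_neg [AddCommGroup β] [LinearOrder β]
    [IsOrderedAddMonoid β] {τ : α → α} (hτ : Function.Involutive τ)
    {g : α → β} (hg : ∀ x, g (τ x) = -g x) :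
    #{x | 0 < g x} = #{x | g x < 0} := by
  refine card_bij' (fun x _ ↦ τ x) (fun x _ ↦ τ x) ?_ ?_ (fun x _ ↦ hτ x)
    (fun x _ ↦ hτ x) <;> simp [hg]

theorem card_filter_pos_add_card_filter_neg_add_card_filter_zero [Zero β] [LinearOrder β]
    (g : α → β) :
    #{x | 0 < g x} + #{x | g x < 0} + #{x | g x = 0} = Fintype.card α := by
  have hne : #{x | 0 < g x} + #{x | g x < 0} = #{x | ¬g x = 0} := by
    rw [← card_union_of_disjoint (disjoint_filter.2 fun x _ h h' ↦ (h.trans h').false),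
      ← filter_or]
    congr 1
    exact filter_congr fun x _ ↦ by rw [← ne_eq, ne_iff_lt_or_gt, or_comm]
  rw [hne, add_comm, card_filter_add_card_filter_not, card_univ]

theorem two_mul_card_filter_le_of_involutive {σ : α → α}
    (hσ : Function.Involutive σ) {p : α → Prop} [DecidablePred p]
    (hp : ∀ x, p x → ¬p (σ x)) :
    2 * #{x | p x} ≤ Fintype.card α := by
  have hle : #{x | p x} ≤ #{x | ¬p x} :=
    card_le_card_of_injOn σ (fun x hx ↦ by simp_all) hσ.injective.injOn
  have := card_filter_add_card_filter_not (s := univ) fun x ↦ p x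
  rw [card_univ] at this
  omega

end Counting

section Flip

variable {ι : Type*}

def boolWeight [Fintype ι] (w : ι → ℝ) (x : ι → Bool) : ℝ :=
  ∑ i, w i * (if x i then 1 else 0)

def flipOn [DecidableEq ι] (I : Finset ι) (x : ι → Bool) : ι → Bool :=
  fun j ↦ if j ∈ I then !(x j) else x j

theorem flipOn_involutive [DecidableEq ι] (I : Finset ι) : Function.Involutive (flipOn I) := by
  intro x
  funext j
  by_cases hj : j ∈ I <;> simp [flipOn, hj]

variable [Fintype ι] [DecidableEq ι]

def flipGain (w : ι → ℝ) (I : Finset ι) (x : ι → Bool) : ℝ :=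
  boolWeight w (flipOn I x) - boolWeight w x

theorem flipGain_eq_sum (w : ι → ℝ) (I : Finset ι) (x : ι → Bool) :
    flipGain w I x = ∑ i ∈ I, w i * (if x i then -1 else 1) := by
  rw [flipGain, boolWeight, boolWeight, ← sum_sub_distrib, ← sum_subset (subset_univ I)]
  · refine sum_congr rfl fun i hi ↦ ?_
    cases h : x i <;> simp [flipOn, hi, h]
  · intro i _ hi
    cases h : x i <;> simp [flipOn, hi, h]

theorem flipGain_compl (w : ι → ℝ) (I : Finset ι) (x : ι → Bool) :
    flipGain w I xᶜ = -flipGain w I x := by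
  rw [flipGain_eq_sum, flipGain_eq_sum, ← sum_neg_distrib]
  refine sum_congr rfl fun i _ ↦ ?_
  cases h : x i <;> simp [Bool.compl_eq_bnot, h]

theorem flipGain_flipOn_singleton (w : ι → ℝ) {I : Finset ι} {i : ι} (hi : i ∈ I)
    (x : ι → Bool) :
    flipGain w I (flipOn {i} x) = flipGain w I x - 2 * w i * (if x i then -1 else 1) := by
  rw [flipGain_eq_sum, flipGain_eq_sum, ← add_sum_erase I _ hi, ← add_sum_erase I _ hi]
  have hrest : ∑ j ∈ I.erase i, w j * (if flipOn {i} x j then -1 else 1) =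
      ∑ j ∈ I.erase i, w j * (if x j then -1 else 1) :=
    sum_congr rfl fun j hj ↦ by simp [flipOn, ne_of_mem_erase hj]
  rw [hrest]
  cases h : x i <;> simp [flipOn, h] <;> ring

theorem flipGain_flipOn_singleton_ne_zero {w : ι → ℝ} {I : Finset ι} {i : ι} (hi : i ∈ I)
    (hw : w i ≠ 0) {x : ι → Bool} (hx : flipGain w I x = 0) :
    flipGain w I (flipOn {i} x) ≠ 0 := by
  rw [flipGain_flipOn_singleton w hi, hx]
  cases x i <;> simpa using hw

end Flip

theorem linear_function_flip_probabilities
    (n : ℕ) (w : Fin n → ℝ) (hw : ∀ i, 0 < w i)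
    (I : Finset (Fin n)) (hI : I.Nonempty)
    (f : (Fin n → Bool) → ℝ)
    (hf : f = fun x => ∑ i, w i * (if x i then 1 else 0))
    (flip : (Fin n → Bool) → (Fin n → Bool))
    (hflip : flip = fun x j => if j ∈ I then !(x j) else x j)
    (Pgt Peq : ℝ)
    (hPgt : Pgt = ((Finset.univ.filter
        (fun x : Fin n → Bool => f (flip x) > f x)).card : ℝ) / 2^n)
    (hPeq : Peq = ((Finset.univ.filter
        (fun x : Fin n → Bool => f (flip x) = f x)).card : ℝ) / 2^n) :
    Pgt = (1 - Peq) / 2 ∧ Peq ≤ 1/2 ∧ Pgt ≥ (1 - Peq) / 4 ∧ Pgt ≥ 1/4 := by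
  obtain ⟨i, hi⟩ := hI
  have hgain : ∀ x, f (flip x) - f x = flipGain w I x := by
    subst hf hflip
    exact fun x ↦ rfl
  simp only [gt_iff_lt, ← sub_pos (a := f (flip _)), ← sub_eq_zero (a := f (flip _)), hgain]
    at hPgt hPeq
  have hcard : Fintype.card (Fin n → Bool) = 2 ^ n := by simp
  have hsplit := card_filter_pos_add_card_filter_neg_add_card_filter_zero (flipGain w I)
  rw [← card_filter_pos_eq_card_filter_neg compl_involutive (flipGain_compl w I), hcard]
    at hsplit
  have hties := two_mul_card_filter_le_of_involutive (flipOn_involutive {i})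
    (p := fun x ↦ flipGain w I x = 0)
    fun x ↦ flipGain_flipOn_singleton_ne_zero hi (hw i).ne'
  rw [hcard] at hties
  have hpow : (0 : ℝ) < 2 ^ n := by positivity
  have hsplitR : (#{x | 0 < flipGain w I x} : ℝ) * 2 + #{x | flipGain w I x = 0} = 2 ^ n := by
    exact_mod_cast (by omega : _ = 2 ^ n)
  have htiesR : 2 * (#{x | flipGain w I x = 0} : ℝ) ≤ 2 ^ n := by exact_mod_cast hties
  have hgt_eq : Pgt = (1 - Peq) / 2 := by
    rw [hPgt, hPeq]
    field_simp
    linarith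
  have heq_le : Peq ≤ 1 / 2 := by
    rw [hPeq, div_le_iff₀ hpow]
    linarith
  exact ⟨hgt_eq, heq_le, by linarith, by linarith⟩
end

section
/- Let (p_n)_{n≥1} and (q_n)_{n≥1} be sequences of positive reals with p_n ≤ 1 for all n. Let I ⊆ ℕ be the set of indices n ≥ 2 such that min{ n^{1.01}/ln n , exp(∑_{i=1}^n p_i) / ( p_{⌈n/2⌉} · ∑_{i=1}^n p_i ) } ≤ 1/q_n. Then ∑_{n ∈ I} q_n < ∞. In particular, if ∑ q_n = ∞, then ℕ \ I is infinite. -/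
/-!
On `I`, `q n` is at most the sum of the reciprocals of the two terms of the minimum, namely
`log n / n ^ 1.01 + p ⌈n/2⌉ * f (S n)` with `S n = ∑_{i ≤ n} p i` and `f x = x e^{-x}`.
The first series converges because `log n = O(n ^ ε)`. For the second, `f x ≤ 2 e^{-x/2}` and `S`
is monotone, so the `n`-th term is at most `2 p m e^{-S m / 2}` with `m = ⌈n/2⌉`; each `m` comes
from two values of `n`, and `(p m / 2) e^{-S m / 2} ≤ e^{-S (m-1) / 2} - e^{-S m / 2}` telescopes.
-/

open Real Finset

lemma sub_mul_exp_neg_le_exp_neg_sub_exp_neg (x y : ℝ) :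
    (y - x) * exp (-y) ≤ exp (-x) - exp (-y) := by
  have h := mul_le_mul_of_nonneg_right (add_one_le_exp (y - x)) (exp_pos (-y)).le
  rw [← exp_add, show y - x + -y = -x by ring] at h
  linarith

lemma mul_exp_neg_le_two_mul_exp_neg_half (x : ℝ) : x * exp (-x) ≤ 2 * exp (-(x / 2)) := by
  have h := mul_le_mul_of_nonneg_right (add_one_le_exp (x / 2)) (exp_pos (-x)).le
  rw [← exp_add] at h
  ring_nf at h ⊢
  nlinarith [exp_pos (-x)]

lemma summable_sub_mul_exp_neg_of_monotone {S : ℕ → ℝ} (hS : Monotone S) :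
    Summable fun n => (S (n + 1) - S n) * exp (-S (n + 1)) := by
  refine summable_of_sum_range_le (c := exp (-S 0))
    (fun n => mul_nonneg (sub_nonneg.2 (hS n.le_succ)) (exp_pos _).le) fun N => ?_
  calc ∑ n ∈ range N, (S (n + 1) - S n) * exp (-S (n + 1))
      ≤ ∑ n ∈ range N, (exp (-S n) - exp (-S (n + 1))) :=
        sum_le_sum fun n _ => sub_mul_exp_neg_le_exp_neg_sub_exp_neg _ _
    _ = exp (-S 0) - exp (-S N) := sum_range_sub' _ N
    _ ≤ exp (-S 0) := sub_le_self _ (exp_pos _).le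

lemma Summable.comp_div_two {M : Type*} [AddCommMonoid M] [TopologicalSpace M] [ContinuousAdd M]
    {f : ℕ → M} (hf : Summable f) : Summable fun n => f (n / 2) :=
  Summable.even_add_odd (by simpa using hf) (by simpa [Nat.mul_add_div] using hf)

lemma summable_log_div_rpow {s : ℝ} (hs : 1 < s) :
    Summable fun n : ℕ => log n / (n : ℝ) ^ s := by
  set ε := (s - 1) / 2 with hε
  have hε0 : 0 < ε := by linarith
  have hmaj : Summable fun n : ℕ => ε⁻¹ * (1 / (n : ℝ) ^ (s - ε)) :=
    (summable_one_div_nat_rpow.2 (by linarith)).mul_left _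
  refine hmaj.of_nonneg_of_le (fun n => by positivity) fun n => ?_
  rcases n.eq_zero_or_pos with rfl | hn
  · simp only [CharP.cast_eq_zero, log_zero, zero_div]
    positivity
  have hn0 : (0 : ℝ) < n := by exact_mod_cast hn
  calc log n / (n : ℝ) ^ s ≤ (n : ℝ) ^ ε / ε / (n : ℝ) ^ s := by
        gcongr; exact log_natCast_le_rpow_div n hε0
    _ = ε⁻¹ * (1 / (n : ℝ) ^ (s - ε)) := by
        rw [rpow_sub hn0]; field_simp

lemma summable_mul_partialSum_mul_exp_neg {p : ℕ → ℝ} (hp : ∀ n, 0 ≤ p n) :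
    Summable fun n => p ((n + 1) / 2) * ((∑ i ∈ Icc 1 n, p i) * exp (-∑ i ∈ Icc 1 n, p i)) := by
  set S : ℕ → ℝ := fun n => ∑ i ∈ Icc 1 n, p i
  have hS_mono : Monotone S := fun a b hab =>
    sum_le_sum_of_subset_of_nonneg (Icc_subset_Icc_right hab) fun i _ _ => hp i
  have hS_succ (k : ℕ) : S (k + 1) = S k + p (k + 1) := sum_Icc_succ_top (by omega) p
  have hT := summable_sub_mul_exp_neg_of_monotone (hS_mono.div_const two_pos.le)
  refine Summable.comp_nat_add (k := 1) <| (hT.comp_div_two.mul_left 4).of_nonneg_of_le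
    (fun n => mul_nonneg (hp _) (mul_nonneg (sum_nonneg fun i _ => hp i) (exp_pos _).le))
    fun n => ?_
  have hm : (n + 1 + 1) / 2 = n / 2 + 1 := by omega
  calc p ((n + 1 + 1) / 2) * (S (n + 1) * exp (-S (n + 1)))
      ≤ p (n / 2 + 1) * (2 * exp (-(S (n + 1) / 2))) := by
        rw [hm]; exact mul_le_mul_of_nonneg_left (mul_exp_neg_le_two_mul_exp_neg_half _) (hp _)
    _ ≤ p (n / 2 + 1) * (2 * exp (-(S (n / 2 + 1) / 2))) := by
        gcongr
        exacts [hp _, hS_mono (by omega)]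
    _ = 4 * ((S (n / 2 + 1) / 2 - S (n / 2) / 2) * exp (-(S (n / 2 + 1) / 2))) := by
        rw [hS_succ]; ring

lemma abs_le_one_div_add_one_div_of_min_le_one_div {a b q : ℝ} (ha : 0 < a) (hb : 0 < b)
    (h : min a b ≤ 1 / q) : |q| ≤ 1 / a + 1 / b := by
  have hq : 0 < q := one_div_pos.1 ((lt_min ha hb).trans_le h)
  rw [abs_of_pos hq]
  rcases min_le_iff.1 h with h | h
  · linarith [(le_one_div ha hq).1 h, one_div_pos.2 hb]
  · linarith [(le_one_div hb hq).1 h, one_div_pos.2 ha]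

theorem summable_over_exceptional_indices_general
    (p q : ℕ → ℝ) (hp : ∀ n, 0 < p n)
    (I : Set ℕ)
    (hI : I = {n : ℕ | 2 ≤ n ∧
      min ((n:ℝ) ^ (1.01 : ℝ) / Real.log n)
          (Real.exp (∑ i ∈ Finset.Icc 1 n, p i) /
            (p ((n+1)/2) * ∑ i ∈ Finset.Icc 1 n, p i))
        ≤ 1 / q n}) :
    Summable (Set.indicator I q) ∧ (¬ Summable q → Set.Infinite Iᶜ) := by
  set S : ℕ → ℝ := fun n => ∑ i ∈ Icc 1 n, p i
  have hmajorant : Summable fun n : ℕ =>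
      log n / (n : ℝ) ^ (1.01 : ℝ) + p ((n + 1) / 2) * (S n * exp (-S n)) :=
    (summable_log_div_rpow (by norm_num)).add
      (summable_mul_partialSum_mul_exp_neg fun n => (hp n).le)
  have hsum : Summable (I.indicator q) := by
    refine (hmajorant.indicator I).of_norm_bounded fun n => ?_
    by_cases hn : n ∈ I
    · rw [Set.indicator_of_mem hn, Set.indicator_of_mem hn, norm_eq_abs]
      obtain ⟨h2n, hmin⟩ := hI ▸ hn
      have hn1 : (1 : ℝ) < n := by exact_mod_cast h2n
      have hS : 0 < S n := sum_pos (fun i _ => hp i) ⟨1, mem_Icc.2 ⟨le_rfl, by omega⟩⟩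
      convert abs_le_one_div_add_one_div_of_min_le_one_div
        (div_pos (rpow_pos_of_pos (by linarith) _) (log_pos hn1))
        (div_pos (exp_pos _) (mul_pos (hp _) hS)) hmin using 2
      · rw [one_div_div]
      · rw [one_div_div, exp_neg]; ring
    · simp [hn]
  refine ⟨hsum, fun hq hfin => hq (hsum.congr_cofinite ?_)⟩
  exact Filter.eventuallyEq_of_mem hfin.compl_mem_cofinite
    fun n hn => Set.indicator_of_mem (not_not.1 hn) q

theorem summable_over_exceptional_indices
    (p q : ℕ → ℝ) (hp : ∀ n, 0 < p n) (hp1 : ∀ n, p n ≤ 1) (hq : ∀ n, 0 < q n)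
    (I : Set ℕ)
    (hI : I = {n : ℕ | 2 ≤ n ∧
      min ((n:ℝ) ^ (1.01 : ℝ) / Real.log n)
          (Real.exp (∑ i ∈ Finset.Icc 1 n, p i) /
            (p ((n+1)/2) * ∑ i ∈ Finset.Icc 1 n, p i))
        ≤ 1 / q n}) :
    Summable (Set.indicator I q) ∧ (¬ Summable q → Set.Infinite Iᶜ) :=
  summable_over_exceptional_indices_general p q hp I hI
end

section
/- Let X_1, ..., X_n be independent random variables and f a function satisfying the bounded differences condition |f(a) - f(a')| ≤ d_i whenever a, a' differ only in coordinate i. Let X = f(X_1, ..., X_n) and S = ∑ d_i². Then P(X > E[X] + t) ≤ exp(-t²/(2S)) and P(X < E[X] - t) ≤ exp(-t²/(2S)). -/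
/-!
The method of bounded differences, run on the product of the laws of the `X i` (independence
says exactly that the joint law is this product). Integrating out one coordinate writes
`f - 𝔼 f = (f - G) + (G - 𝔼 f)`, where `G` is the partial integral. Each slice of `f - G` is
bounded in an interval of length `2 dᵢ`, so by Hoeffding's lemma it is sub-Gaussian with parameter
`dᵢ²`; `G` again has bounded differences in the remaining coordinates, and by induction and
Fubini the parameters add up to `S`. The Chernoff bound for a sub-Gaussian variable then
gives both tails.
-/

open MeasureTheory ProbabilityTheory

open scoped NNReal

lemma mem_Icc_of_abs_sub_le {α : Type*} {h : α → ℝ} {D : ℝ} (hD : ∀ a a', |h a - h a'| ≤ D)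
    (a₀ a : α) : h a ∈ Set.Icc (h a₀ - D) (h a₀ + D) := by
  have := abs_sub_le_iff.1 (hD a a₀)
  constructor <;> linarith

namespace ProbabilityTheory

variable {α β : Type*} [MeasurableSpace α] [MeasurableSpace β]

lemma integrable_of_abs_sub_le {κ : Measure α} [IsProbabilityMeasure κ] {h : α → ℝ}
    (hh : AEMeasurable h κ) {D : ℝ} (hD : ∀ a a', |h a - h a'| ≤ D) : Integrable h κ := by
  obtain ⟨a₀⟩ := nonempty_of_isProbabilityMeasure κ
  exact .of_mem_Icc _ _ hh (ae_of_all _ (mem_Icc_of_abs_sub_le hD a₀))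

lemma hasSubgaussianMGF_sub_integral_of_abs_sub_le {κ : Measure α} [IsProbabilityMeasure κ]
    {h : α → ℝ} (hh : AEMeasurable h κ) {D : ℝ} (hD : ∀ a a', |h a - h a'| ≤ D) :
    HasSubgaussianMGF (fun a ↦ h a - ∫ a', h a' ∂κ) (‖D‖₊ ^ 2) κ := by
  obtain ⟨a₀⟩ := nonempty_of_isProbabilityMeasure κ
  convert hasSubgaussianMGF_of_mem_Icc hh (ae_of_all _ (mem_Icc_of_abs_sub_le hD a₀)) using 2
  rw [add_sub_sub_cancel, ← two_mul, nnnorm_mul, Real.nnnorm_ofNat,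
    mul_div_cancel_left₀ _ two_ne_zero]

open Real in
lemma hasSubgaussianMGF_prod_of_slices {κ : Measure α} {ν : Measure β} [SFinite κ] [SFinite ν]
    {F : α × β → ℝ} (hF : AEMeasurable F (κ.prod ν)) {G : β → ℝ} {m : ℝ} {c₁ c₂ : ℝ≥0}
    (hslice : ∀ᵐ b ∂ν, HasSubgaussianMGF (fun a ↦ F (a, b) - G b) c₁ κ)
    (hG : HasSubgaussianMGF (fun b ↦ G b - m) c₂ ν) :
    HasSubgaussianMGF (fun p ↦ F p - m) (c₁ + c₂) (κ.prod ν) := by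
  have hsplit : ∀ t a b,
      exp (t * (F (a, b) - m)) = exp (t * (G b - m)) * exp (t * (F (a, b) - G b)) :=
    fun t a b ↦ by rw [← exp_add]; ring_nf
  have hslice_int : ∀ t, ∀ᵐ b ∂ν, Integrable (fun a ↦ exp (t * (F (a, b) - m))) κ := fun t ↦ by
    filter_upwards [hslice] with b hb
    simpa only [hsplit] using (hb.integrable_exp_mul t).const_mul (exp (t * (G b - m)))
  have hslice_le : ∀ t, ∀ᵐ b ∂ν,
      ∫ a, exp (t * (F (a, b) - m)) ∂κ ≤ exp (t * (G b - m)) * exp (c₁ * t ^ 2 / 2) := fun t ↦ by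
    filter_upwards [hslice] with b hb
    simp_rw [hsplit, integral_const_mul]
    gcongr
    exact hb.mgf_le t
  have hint : ∀ t, Integrable (fun p ↦ exp (t * (F p - m))) (κ.prod ν) := fun t ↦ by
    have hmeas : AEStronglyMeasurable (fun p ↦ exp (t * (F p - m))) (κ.prod ν) :=
      ((hF.sub_const m).const_mul t).exp.aestronglyMeasurable
    refine (integrable_prod_iff' hmeas).2 ⟨hslice_int t, ?_⟩
    refine ((hG.integrable_exp_mul t).mul_const (exp (c₁ * t ^ 2 / 2))).mono'
      hmeas.norm.prod_swap.integral_prod_right' ?_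
    filter_upwards [hslice_le t] with b hb
    simp only [Real.norm_eq_abs, abs_exp]
    rwa [abs_of_nonneg (integral_nonneg fun _ ↦ (exp_pos _).le)]
  refine ⟨hint, fun t ↦ ?_⟩
  calc mgf (fun p ↦ F p - m) (κ.prod ν) t
      = ∫ b, ∫ a, exp (t * (F (a, b) - m)) ∂κ ∂ν := integral_prod_symm _ (hint t)
    _ ≤ ∫ b, exp (t * (G b - m)) * exp (c₁ * t ^ 2 / 2) ∂ν :=
        integral_mono_ae (hint t).integral_prod_right ((hG.integrable_exp_mul t).mul_const _)
          (hslice_le t)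
    _ = mgf (fun b ↦ G b - m) ν t * exp (c₁ * t ^ 2 / 2) := integral_mul_const _ _
    _ ≤ exp (c₂ * t ^ 2 / 2) * exp (c₁ * t ^ 2 / 2) := by gcongr; exact hG.mgf_le t
    _ = exp ((c₁ + c₂ : ℝ≥0) * t ^ 2 / 2) := by rw [← exp_add]; push_cast; ring_nf

lemma HasSubgaussianMGF.measureReal_tails_le {μ : Measure α} [IsFiniteMeasure μ] {Y : α → ℝ}
    {m : ℝ} {c : ℝ≥0} (h : HasSubgaussianMGF (fun ω ↦ Y ω - m) c μ) {t : ℝ} (ht : 0 ≤ t) :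
    μ.real {ω | m + t < Y ω} ≤ Real.exp (-t ^ 2 / (2 * c)) ∧
      μ.real {ω | Y ω < m - t} ≤ Real.exp (-t ^ 2 / (2 * c)) := by
  constructor
  · refine (measureReal_mono fun ω (hω : m + t < Y ω) ↦ ?_).trans (h.measure_ge_le ht)
    exact le_sub_iff_add_le'.2 hω.le
  · refine (measureReal_mono fun ω (hω : Y ω < m - t) ↦ ?_).trans (h.neg.measure_ge_le ht)
    change t ≤ -(Y ω - m)
    linarith

def HasBoundedDifferences {ι : Type*} {E : ι → Type*} (f : (∀ i, E i) → ℝ) (d : ι → ℝ) : Prop :=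
  ∀ i (a a' : ∀ j, E j), (∀ j, j ≠ i → a j = a' j) → |f a - f a'| ≤ d i

namespace HasBoundedDifferences

variable {n : ℕ} {E : Fin (n + 1) → Type*} {f : (∀ i, E i) → ℝ} {d : Fin (n + 1) → ℝ}

lemma abs_sub_insertNth_le (hbd : HasBoundedDifferences f d) (i : Fin (n + 1))
    (b : ∀ j, E (i.succAbove j)) (a a' : E i) :
    |f (i.insertNth a b) - f (i.insertNth a' b)| ≤ d i := by
  refine hbd i _ _ fun k hk ↦ ?_
  obtain ⟨k, rfl⟩ := Fin.exists_succAbove_eq hk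
  simp

lemma integral_insertNth [∀ i, MeasurableSpace (E i)] (hbd : HasBoundedDifferences f d)
    (i : Fin (n + 1)) (κ : Measure (E i)) [IsProbabilityMeasure κ]
    (hmeas : ∀ b, AEMeasurable (fun a ↦ f (i.insertNth a b)) κ) :
    HasBoundedDifferences (fun b ↦ ∫ a, f (i.insertNth a b) ∂κ) (fun j ↦ d (i.succAbove j)) := by
  intro j b b' hbb'
  have hpoint : ∀ a, ‖f (i.insertNth a b) - f (i.insertNth a b')‖ ≤ d (i.succAbove j) := by
    intro a
    rw [Real.norm_eq_abs]
    refine hbd _ _ _ fun k hk ↦ ?_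
    rcases Fin.eq_self_or_eq_succAbove i k with rfl | ⟨k, rfl⟩
    · simp
    · simpa using hbb' k (ne_of_apply_ne _ hk)
  have hint : ∀ b, Integrable (fun a ↦ f (i.insertNth a b)) κ := fun b ↦
    integrable_of_abs_sub_le (hmeas b) (hbd.abs_sub_insertNth_le i b)
  rw [← integral_sub (hint b) (hint b'), ← Real.norm_eq_abs]
  simpa using norm_integral_le_of_norm_le_const (ae_of_all κ hpoint)

end HasBoundedDifferences

theorem HasBoundedDifferences.hasSubgaussianMGF_pi {n : ℕ} {E : Fin n → Type*}
    [∀ i, MeasurableSpace (E i)] (ν : ∀ i, Measure (E i)) [∀ i, IsProbabilityMeasure (ν i)]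
    {f : (∀ i, E i) → ℝ} (hf : Measurable f) {d : Fin n → ℝ}
    (hbd : HasBoundedDifferences f d) :
    HasSubgaussianMGF (fun x ↦ f x - ∫ y, f y ∂Measure.pi ν) (∑ i, ‖d i‖₊ ^ 2)
      (Measure.pi ν) := by
  induction n with
  | zero =>
    have hzero : (fun x ↦ f x - ∫ y, f y ∂Measure.pi ν) = fun _ ↦ 0 := by
      funext x
      simp [fun y ↦ congrArg f (Subsingleton.elim y x)]
    simp [hzero]
  | succ n ih =>
    let T := MeasurableEquiv.piFinSuccAbove E 0
    have hT := measurePreserving_piFinSuccAbove ν 0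
    have hfT : Measurable fun p ↦ f (T.symm p) := hf.comp T.symm.measurable
    have hslice_meas : ∀ b, Measurable fun a ↦ f (Fin.insertNth 0 a b) :=
      fun b ↦ hfT.comp measurable_prodMk_right
    set G := fun b ↦ ∫ a, f (Fin.insertNth 0 a b) ∂ν 0
    have hG_meas : Measurable G := hfT.stronglyMeasurable.integral_prod_left'.measurable
    have hprod := hasSubgaussianMGF_prod_of_slices hfT.aemeasurable
      (ae_of_all _ fun b ↦ hasSubgaussianMGF_sub_integral_of_abs_sub_le
        (hslice_meas b).aemeasurable (hbd.abs_sub_insertNth_le 0 b))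
      (ih (fun j ↦ ν (Fin.succAbove 0 j)) hG_meas
        (hbd.integral_insertNth 0 (ν 0) fun b ↦ (hslice_meas b).aemeasurable))
    have hmean :
        ∫ x, f x ∂Measure.pi ν = ∫ b, G b ∂Measure.pi fun j ↦ ν (Fin.succAbove 0 j) := by
      rw [← (hT.symm T).integral_comp' f]
      exact integral_prod_symm _ <| (hprod.integrable.add (integrable_const _)).congr
        (ae_of_all _ fun _ ↦ sub_add_cancel _ _)
    rw [hmean, Fin.sum_univ_succAbove _ 0]
    rw [← hT.map_eq] at hprod
    simpa only [Function.comp_def, MeasurableEquiv.symm_apply_apply] using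
      hprod.of_map T.measurable.aemeasurable

end ProbabilityTheory

theorem mcdiarmid_bounded_differences
    {Ω : Type*} [MeasurableSpace Ω] (μ : Measure Ω) [IsProbabilityMeasure μ]
    (n : ℕ) (E : Fin n → Type*) [∀ i, MeasurableSpace (E i)]
    (X : ∀ i, Ω → E i)
    (hind : iIndepFun X μ)
    (hmeas : ∀ i, Measurable (X i))
    (f : (∀ i, E i) → ℝ) (hf : Measurable f)
    (d : Fin n → ℝ)
    (hbd : ∀ (i : Fin n) (a a' : ∀ j, E j),
      (∀ j, j ≠ i → a j = a' j) → |f a - f a'| ≤ d i)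
    (S : ℝ) (hS : S = ∑ i, (d i)^2) (t : ℝ) (ht : 0 < t) :
    (μ {ω | (∫ ω', f (fun i => X i ω') ∂μ) + t < f (fun i => X i ω)}).toReal
      ≤ Real.exp (-t^2 / (2*S)) ∧
    (μ {ω | f (fun i => X i ω) < (∫ ω', f (fun i => X i ω') ∂μ) - t}).toReal
      ≤ Real.exp (-t^2 / (2*S)) := by
  have hJ : Measurable fun ω i ↦ X i ω := measurable_pi_iff.2 hmeas
  have (i : Fin n) : IsProbabilityMeasure (μ.map (X i)) :=
    Measure.isProbabilityMeasure_map (hmeas i).aemeasurable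
  have hpi := HasBoundedDifferences.hasSubgaussianMGF_pi (fun i ↦ μ.map (X i)) hf hbd
  rw [← hind.map_fun_eq_pi_map fun i ↦ (hmeas i).aemeasurable] at hpi
  have hsub := hpi.of_map hJ.aemeasurable
  rw [integral_map hJ.aemeasurable hf.aestronglyMeasurable] at hsub
  have hS' : ((∑ i, ‖d i‖₊ ^ 2 : ℝ≥0) : ℝ) = S := by simp [hS]
  rw [← hS']
  exact hsub.measureReal_tails_le ht.le
end
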